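/- Let m, n ∈ ℕ, let 0 < q_ℓ < 1 for 1 ≤ ℓ ≤ m, and let v_{j,ℓ} ∈ ℂ satisfy q_ℓ·e^{4π|Im(v_{j,ℓ})|} < 1 for all 1 ≤ j ≤ n, 1 ≤ ℓ ≤ m. Then the n×n complex matrix whose (j,k) entry is ∏_{ℓ=1}^{m} D_ℓ(v_{j,ℓ} − conj(v_{k,ℓ})), where D_ℓ(v) = ∑_{r∈ℤ} (q_ℓ^r/(1+q_ℓ^{2r})) e^{2πirv}, is positive semidefinite. -/

import Mathlib

/-!
With `a_r = q^r / (1 + q^{2r}) ≥ 0` and `e_r(w) = e^{2πirw}` one has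
`D(w - conj z) = ∑_r a_r e_r(w) conj (e_r(z))`, and the condition `q e^{4π|Im w|} < 1`
makes this series converge absolutely. Hence each matrix `(D_ℓ(v_{j,ℓ} - conj v_{k,ℓ}))_{j,k}` is a convergent
sum of nonnegative multiples of rank-one matrices `e eᴴ`, so positive semidefinite, and the matrix
of the theorem is their Schur product.
-/

open Complex ComplexOrder

/-- The Fourier series `D(v) = ∑_{r ∈ ℤ} (q^r / (1 + q^{2r})) e^{2πirv}`. -/
noncomputable def dnFourier (q : ℝ) (v : ℂ) : ℂ :=
  ∑' r : ℤ, ((q : ℂ) ^ r / (1 + (q : ℂ) ^ (2 * r))) * Complex.exp (2 * Real.pi * Complex.I * r * v)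

open ComplexConjugate
open scoped Real

namespace Matrix

variable {ι n 𝕜 : Type*} [RCLike 𝕜]

theorem posSemidef_tsum [Fintype n] {A : ι → Matrix n n 𝕜} (hA : Summable A)
    (h : ∀ i, (A i).PosSemidef) : (∑' i, A i).PosSemidef := by
  refine .of_dotProduct_mulVec_nonneg ?_ fun x => ?_
  · simp only [IsHermitian, conjTranspose_tsum, (h _).isHermitian.eq]
  · let quadForm : Matrix n n 𝕜 →+ 𝕜 :=
      AddMonoidHom.mk' (fun M => star x ⬝ᵥ (M *ᵥ x)) fun M N => by
        simp [add_mulVec, dotProduct_add]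
    have hcont : Continuous quadForm := by
      show Continuous fun M : Matrix n n 𝕜 => star x ⬝ᵥ (M *ᵥ x)
      fun_prop
    exact (hA.hasSum.map quadForm hcont).nonneg fun i => (h i).dotProduct_mulVec_nonneg x

theorem posSemidef_entrywise_prod [Finite n] {s : Finset ι} {A : ι → Matrix n n 𝕜}
    (h : ∀ i ∈ s, (A i).PosSemidef) : (of fun j k => ∏ i ∈ s, A i j k).PosSemidef := by
  classical
  induction s using Finset.induction_on with
  | empty => simpa [vecMulVec, Pi.star_def] using posSemidef_vecMulVec_self_star (1 : n → 𝕜)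
  | insert a s ha ih =>
    simp only [Finset.prod_insert ha]
    exact (h a (s.mem_insert_self a)).hadamard (ih fun i hi => h i (Finset.mem_insert_of_mem hi))

theorem PosSemidef.sum_sum_mul_mul_star_nonneg [Fintype n] {M : Matrix n n 𝕜} (hM : M.PosSemidef)
    (c : n → 𝕜) : 0 ≤ ∑ j, ∑ k, M j k * c j * star (c k) := by
  convert hM.dotProduct_mulVec_nonneg (star c) using 1
  simp only [dotProduct, mulVec, star_star, Finset.mul_sum, Pi.star_apply]
  exact Finset.sum_congr rfl fun j _ => Finset.sum_congr rfl fun k _ => by ring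

end Matrix

noncomputable def fourierExp (r : ℤ) (w : ℂ) : ℂ := cexp (2 * π * I * r * w)

noncomputable def dnCoef (q : ℝ) (r : ℤ) : ℝ := q ^ r / (1 + q ^ (2 * r))

section dnCoef

variable {q : ℝ}

theorem dnCoef_nonneg (hq : 0 ≤ q) (r : ℤ) : 0 ≤ dnCoef q r := by
  unfold dnCoef; positivity

theorem dnCoef_neg (hq : q ≠ 0) (r : ℤ) : dnCoef q (-r) = dnCoef q r := by
  have hx : q ^ r ≠ 0 := zpow_ne_zero r hq
  simp only [dnCoef, zpow_neg, mul_comm (2 : ℤ), zpow_mul, zpow_ofNat, inv_pow]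
  field_simp
  ring

theorem dnCoef_le_pow_natAbs (hq : 0 < q) (r : ℤ) : dnCoef q r ≤ q ^ r.natAbs := by
  have hnat (k : ℕ) : dnCoef q k ≤ q ^ k := by
    unfold dnCoef
    rw [zpow_natCast]
    exact div_le_self (by positivity) (le_add_of_nonneg_right (by positivity))
  rcases Int.natAbs_eq r with hr | hr <;> rw [hr]
  · rw [Int.natAbs_natCast]; exact hnat _
  · rw [dnCoef_neg hq.ne', Int.natAbs_neg, Int.natAbs_natCast]; exact hnat _

end dnCoef

theorem norm_fourierExp_le (r : ℤ) (w : ℂ) :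
    ‖fourierExp r w‖ ≤ rexp (2 * π * |w.im|) ^ r.natAbs := by
  rw [fourierExp, norm_exp, ← Real.exp_nat_mul, Real.exp_le_exp]
  have : -(r * w.im) ≤ |(r : ℝ)| * |w.im| := abs_mul (r : ℝ) w.im ▸ neg_le_abs _
  simp only [mul_re, mul_im, ofReal_re, ofReal_im, I_re, I_im, intCast_re, intCast_im,
    re_ofNat, im_ofNat, Nat.cast_natAbs, Int.cast_abs]
  nlinarith [Real.pi_pos]

theorem dnFourier_sub_conj (q : ℝ) (w z : ℂ) :
    dnFourier q (w - conj z) =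
      ∑' r, (dnCoef q r : ℂ) * fourierExp r w * conj (fourierExp r z) := by
  unfold dnFourier
  congr 1 with r
  have hexp :
      cexp (2 * π * I * r * (w - conj z)) = fourierExp r w * conj (fourierExp r z) := by
    rw [fourierExp, fourierExp, ← exp_conj, ← exp_add]
    simp only [map_mul, conj_I, conj_ofReal, map_ofNat, map_intCast]
    ring_nf
  rw [mul_assoc (dnCoef q r : ℂ), ← hexp, dnCoef]
  push_cast
  rfl

theorem summable_dnCoef_mul_fourierExp {q : ℝ} (hq : 0 < q) {w z : ℂ}
    (hw : q * rexp (4 * π * |w.im|) < 1) (hz : q * rexp (4 * π * |z.im|) < 1) :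
    Summable fun r : ℤ => (dnCoef q r : ℂ) * fourierExp r w * conj (fourierExp r z) := by
  set t := q * rexp (2 * π * |w.im|) * rexp (2 * π * |z.im|)
  have ht0 : 0 ≤ t := by positivity
  -- `t` is the geometric mean of the two quantities bounded in the hypotheses
  have ht1 : t < 1 := by
    have hsq : t ^ 2 = (q * rexp (4 * π * |w.im|)) * (q * rexp (4 * π * |z.im|)) := by
      simp only [t, mul_pow, ← Real.exp_nat_mul]
      ring_nf
    refine (pow_lt_one_iff_of_nonneg ht0 two_ne_zero).1 ?_
    rw [hsq]
    exact mul_lt_one_of_nonneg_of_lt_one_left (by positivity) hw hz.le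
  have hgeom : Summable fun r : ℤ => t ^ r.natAbs := by
    apply Summable.of_nat_of_neg <;> simpa using summable_geometric_of_lt_one ht0 ht1
  refine .of_norm_bounded hgeom fun r => ?_
  calc ‖(dnCoef q r : ℂ) * fourierExp r w * conj (fourierExp r z)‖
      = dnCoef q r * (‖fourierExp r w‖ * ‖fourierExp r z‖) := by
        rw [norm_mul, norm_mul, RCLike.norm_conj, norm_real,
          Real.norm_of_nonneg (dnCoef_nonneg hq.le r), mul_assoc]
    _ ≤ q ^ r.natAbs *
          (rexp (2 * π * |w.im|) ^ r.natAbs * rexp (2 * π * |z.im|) ^ r.natAbs) := by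
        gcongr
        · exact dnCoef_le_pow_natAbs hq r
        · exact norm_fourierExp_le r w
        · exact norm_fourierExp_le r z
    _ = t ^ r.natAbs := by simp only [t, mul_pow, mul_assoc]

theorem posSemidef_dnFourier_sub_conj {n : Type*} [Fintype n] {q : ℝ} (hq : 0 < q) {w : n → ℂ}
    (hw : ∀ j, q * rexp (4 * π * |(w j).im|) < 1) :
    (Matrix.of fun j k => dnFourier q (w j - conj (w k))).PosSemidef := by
  set A : ℤ → Matrix n n ℂ := fun r =>
    dnCoef q r • Matrix.vecMulVec (fun j => fourierExp r (w j)) (star fun k => fourierExp r (w k))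
  have hA : HasSum A (Matrix.of fun j k => dnFourier q (w j - conj (w k))) :=
    Pi.hasSum.2 fun j => Pi.hasSum.2 fun k => by
      simpa [A, Matrix.vecMulVec_apply, mul_assoc, dnFourier_sub_conj] using
        (summable_dnCoef_mul_fourierExp hq (hw j) (hw k)).hasSum
  rw [← hA.tsum_eq]
  exact Matrix.posSemidef_tsum hA.summable fun r =>
    (Matrix.posSemidef_vecMulVec_self_star _).smul (dnCoef_nonneg hq.le r)

theorem dn_product_matrix_posSemidef_general (m n : ℕ) (q : Fin m → ℝ)
    (hq0 : ∀ l, 0 < q l) (v : Fin n → Fin m → ℂ)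
    (hv : ∀ j l, q l * Real.exp (4 * Real.pi * |(v j l).im|) < 1) :
    ∀ c : Fin n → ℂ,
      0 ≤ ∑ j : Fin n, ∑ k : Fin n,
        (∏ l : Fin m, dnFourier (q l) (v j l - (starRingEnd ℂ) (v k l)))
          * c j * (starRingEnd ℂ) (c k) := by
  intro c
  have hfactor (l : Fin m) :
      (Matrix.of fun j k => dnFourier (q l) (v j l - conj (v k l))).PosSemidef :=
    posSemidef_dnFourier_sub_conj (hq0 l) (hv · l)
  have hprod := Matrix.posSemidef_entrywise_prod (s := Finset.univ) fun l _ => hfactor l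
  exact hprod.sum_sum_mul_mul_star_nonneg c

/-- For `m, n ∈ ℕ`, `0 < q_ℓ < 1` and `v_{j,ℓ} ∈ ℂ` with `q_ℓ·e^{4π|Im v_{j,ℓ}|} < 1`, the
matrix with `(j,k)` entry `∏_{ℓ=1}^m D_ℓ(v_{j,ℓ} - conj v_{k,ℓ})` is positive semidefinite. -/
theorem dn_product_matrix_posSemidef (m n : ℕ) (q : Fin m → ℝ)
    (hq0 : ∀ l, 0 < q l) (hq1 : ∀ l, q l < 1) (v : Fin n → Fin m → ℂ)
    (hv : ∀ j l, q l * Real.exp (4 * Real.pi * |(v j l).im|) < 1) :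
    ∀ c : Fin n → ℂ,
      0 ≤ ∑ j : Fin n, ∑ k : Fin n,
        (∏ l : Fin m, dnFourier (q l) (v j l - (starRingEnd ℂ) (v k l)))
          * c j * (starRingEnd ℂ) (c k) :=
  dn_product_matrix_posSemidef_general m n q hq0 v hv
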